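/- Let Z be an m×n real matrix with singular value decomposition Z = U diag(σ) V'. For λ ≥ 0, the matrix S_{λ,ℓ₀}(Z) := U diag(σ_1·1(σ_1 > √(2λ)), …, σ_{min(m,n)}·1(σ_{min(m,n)} > √(2λ))) V' (hard-thresholding of the singular values at level √(2λ)) is a minimizer over all m×n matrices X of (1/2)‖X − Z‖_F² + λ·rank(X). -/

import Mathlib

open Matrix

/-- Squared Frobenius norm of a real matrix. -/
noncomputable def frobSq {m n : ℕ} (A : Matrix (Fin m) (Fin n) ℝ) : ℝ :=
  ∑ i, ∑ j, (A i j) ^ 2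

/-!
Conjugating by the singular vectors reduces everything to `diag σ`. There the thresholded matrix
costs `∑ᵢ min (σᵢ² / 2, λ)`, one coordinate at a time. A competitor `X` of rank `r` gives
`Y = Uᵀ X V` of rank at most `r` with `‖Y - diag σ‖_F ≤ ‖X - Z‖_F`. Multiplying `Y - diag σ` on the
left by `Wᵀ`, where the columns of `W` are an orthonormal basis of the orthogonal complement of the
column space of `Y`, kills `Y` and shows `‖Y - diag σ‖_F² ≥ ∑ⱼ σⱼ² qⱼ`, with weights
`qⱼ = ‖Wᵀ eⱼ‖² ∈ [0, 1]` of total mass `n - r`. Since `σ` is decreasing this is at least the tail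
`∑_{i ≥ r} σᵢ²` (Eckart–Young), and `∑ᵢ min (σᵢ² / 2, λ) ≤ ½ ∑_{i ≥ r} σᵢ² + λ r`.
-/

open Finset

section Frobenius

variable {m n k : ℕ}

theorem frobSq_eq_trace (A : Matrix (Fin m) (Fin n) ℝ) : frobSq A = (Aᵀ * A).trace := by
  simp only [frobSq, trace, Matrix.diag, mul_apply, transpose_apply, sq]
  exact sum_comm

theorem frobSq_neg (A : Matrix (Fin m) (Fin n) ℝ) : frobSq (-A) = frobSq A := by
  simp [frobSq]

theorem frobSq_diagonal (s : Fin n → ℝ) : frobSq (diagonal s) = ∑ i, s i ^ 2 := by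
  refine sum_congr rfl fun i _ => ?_
  rw [sum_eq_single i (fun j _ hj => by simp [diagonal_apply_ne _ hj.symm]) (by simp),
    diagonal_apply_eq]

theorem frobSq_transpose_mul_diagonal (W : Matrix (Fin n) (Fin k) ℝ) (s : Fin n → ℝ) :
    frobSq (Wᵀ * diagonal s) = ∑ j, s j ^ 2 * ∑ l, W j l ^ 2 := by
  simp only [frobSq, mul_diagonal, transpose_apply, mul_pow, mul_sum]
  rw [sum_comm]
  exact sum_congr rfl fun _ _ => sum_congr rfl fun _ _ => mul_comm _ _

theorem frobSq_mul_of_transpose_mul_eq_one {U : Matrix (Fin m) (Fin n) ℝ} (hU : Uᵀ * U = 1)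
    (A : Matrix (Fin n) (Fin k) ℝ) : frobSq (U * A) = frobSq A := by
  rw [frobSq_eq_trace, frobSq_eq_trace, transpose_mul, Matrix.mul_assoc, ← Matrix.mul_assoc Uᵀ,
    hU, Matrix.one_mul]

theorem frobSq_mul_of_mul_transpose_eq_one {W : Matrix (Fin n) (Fin k) ℝ} (hW : W * Wᵀ = 1)
    (A : Matrix (Fin m) (Fin n) ℝ) : frobSq (A * W) = frobSq A := by
  rw [frobSq_eq_trace, frobSq_eq_trace, transpose_mul, Matrix.mul_assoc, trace_mul_comm,
    Matrix.mul_assoc, Matrix.mul_assoc A, hW, Matrix.mul_one]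

theorem frobSq_transpose_mul_add_frobSq_sub {U : Matrix (Fin m) (Fin n) ℝ} (hU : Uᵀ * U = 1)
    (M : Matrix (Fin m) (Fin k) ℝ) :
    frobSq (Uᵀ * M) + frobSq ((1 - U * Uᵀ) * M) = frobSq M := by
  have hP : (1 - U * Uᵀ)ᵀ * (1 - U * Uᵀ) = 1 - U * Uᵀ := by
    rw [transpose_sub, transpose_one, transpose_mul, transpose_transpose,
      show (1 - U * Uᵀ) * (1 - U * Uᵀ) = 1 - U * Uᵀ - U * Uᵀ + U * (Uᵀ * U) * Uᵀ by
        simp only [sub_mul, mul_sub, Matrix.one_mul, Matrix.mul_one, Matrix.mul_assoc]; abel,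
      hU, Matrix.mul_one, sub_add_cancel]
  rw [frobSq_eq_trace, frobSq_eq_trace, frobSq_eq_trace, ← trace_add, transpose_mul,
    transpose_mul, transpose_transpose, Matrix.mul_assoc Mᵀ (1 - U * Uᵀ)ᵀ,
    ← Matrix.mul_assoc (1 - U * Uᵀ)ᵀ, hP, Matrix.sub_mul, Matrix.one_mul, Matrix.mul_sub,
    Matrix.mul_assoc, Matrix.mul_assoc, add_sub_cancel]

theorem frobSq_transpose_mul_le {U : Matrix (Fin m) (Fin n) ℝ} (hU : Uᵀ * U = 1)
    (M : Matrix (Fin m) (Fin k) ℝ) : frobSq (Uᵀ * M) ≤ frobSq M := by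
  rw [← frobSq_transpose_mul_add_frobSq_sub hU M]
  exact le_add_of_nonneg_right (by unfold frobSq; positivity)

end Frobenius

theorem rank_mul_mul_of_orthonormal {m n k : ℕ} {U : Matrix (Fin m) (Fin n) ℝ}
    {W : Matrix (Fin n) (Fin k) ℝ} (hU : Uᵀ * U = 1) (hW : W * Wᵀ = 1)
    (D : Matrix (Fin n) (Fin n) ℝ) : (U * D * W).rank = D.rank := by
  refine le_antisymm ((rank_mul_le_left _ _).trans (rank_mul_le_right _ _)) ?_
  calc D.rank = (Uᵀ * (U * D * W) * Wᵀ).rank := by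
        rw [← Matrix.mul_assoc, ← Matrix.mul_assoc, hU, Matrix.one_mul, Matrix.mul_assoc, hW,
          Matrix.mul_one]
    _ ≤ (U * D * W).rank := (rank_mul_le_left _ _).trans (rank_mul_le_right _ _)

theorem Fin.card_filter_le_val {n r : ℕ} : #{i : Fin n | r ≤ i.val} = n - r := by
  have := card_filter_add_card_filter_not (s := univ) fun i : Fin n => r ≤ i.val
  simp only [not_le, Fin.card_filter_val_lt, card_univ, Fintype.card_fin] at this
  omega

theorem sum_min_le_sum_filter_le_add {n : ℕ} (f : Fin n → ℝ) {c : ℝ} (hc : 0 ≤ c) (r : ℕ) :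
    ∑ i, min (f i) c ≤ ∑ i with r ≤ i.val, f i + c * r := by
  rw [← sum_filter_add_sum_filter_not univ fun i : Fin n => r ≤ i.val]
  gcongr with i
  · exact min_le_left _ _
  · calc ∑ i : Fin n with ¬r ≤ i.val, min (f i) c ≤ ∑ i : Fin n with ¬r ≤ i.val, c :=
          sum_le_sum fun _ _ => min_le_right _ _
      _ ≤ c * r := by
          simp only [sum_const, not_le, Fin.card_filter_val_lt, nsmul_eq_mul, mul_comm c]
          gcongr
          exact_mod_cast min_le_right _ _

theorem sum_filter_le_sum_mul_of_antitone {n r : ℕ} {s q : Fin n → ℝ} (hs : Antitone s)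
    (hq0 : 0 ≤ q) (hq1 : q ≤ 1) (hq : ∑ i, q i + r = n) :
    ∑ i with r ≤ i.val, s i ≤ ∑ i, s i * q i := by
  have hrn : r ≤ n := by
    have := sum_nonneg fun i (_ : i ∈ univ) => hq0 i
    exact_mod_cast (show (r : ℝ) ≤ n by linarith)
  obtain ⟨τ, hτtail, hτhead⟩ : ∃ τ, (∀ i : Fin n, r ≤ i.val → s i ≤ τ) ∧
      ∀ i : Fin n, i.val < r → τ ≤ s i := by
    by_cases h : r < n
    · exact ⟨s ⟨r, h⟩, fun i hi => hs (Fin.le_def.mpr hi), fun i hi => hs (Fin.le_def.mpr hi.le)⟩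
    · obtain ⟨τ, hτ⟩ := (Set.finite_range s).bddBelow
      exact ⟨τ, fun i hi => absurd i.isLt (by omega), fun i _ => hτ ⟨i, rfl⟩⟩
  have hcard : (#{i : Fin n | r ≤ i.val} : ℝ) = ∑ i, q i := by
    rw [Fin.card_filter_le_val, Nat.cast_sub hrn]; linarith
  -- Compare with the constant `τ` term by term; the `τ`-terms cancel since the weights have the
  -- mass of the tail.
  calc ∑ i with r ≤ i.val, s i = ∑ i, if r ≤ i.val then s i else 0 := sum_filter _ _
    _ ≤ ∑ i, (s i * q i + τ * ((if r ≤ i.val then 1 else 0) - q i)) := by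
        refine sum_le_sum fun i _ => ?_
        split_ifs with hi
        · nlinarith [hτtail i hi, show q i ≤ 1 from hq1 i]
        · nlinarith [hτhead i (not_le.mp hi), show 0 ≤ q i from hq0 i]
    _ = ∑ i, s i * q i := by
        rw [sum_add_distrib, ← mul_sum, sum_sub_distrib, sum_boole, hcard, sub_self, mul_zero,
          add_zero]

theorem exists_orthonormal_cols_transpose_mul_eq_zero {n p : ℕ} (Y : Matrix (Fin n) (Fin p) ℝ) :
    ∃ k, k + Y.rank = n ∧ ∃ W : Matrix (Fin n) (Fin k) ℝ, Wᵀ * W = 1 ∧ Wᵀ * Y = 0 := by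
  set K := (LinearMap.range (toEuclideanLin Y))ᗮ
  have hrank : Y.rank = Module.finrank ℝ (LinearMap.range (toEuclideanLin Y)) := by
    rw [toEuclideanLin_eq_toLin_orthonormal]
    exact Y.rank_eq_finrank_range_toLin _ _
  let b := stdOrthonormalBasis ℝ K
  refine ⟨_, ?_, of fun j l => (b l : EuclideanSpace ℝ (Fin n)) j, ?_, ?_⟩
  · rw [hrank, add_comm, Submodule.finrank_add_finrank_orthogonal, finrank_euclideanSpace_fin]
  · ext l l'
    rw [one_apply, ← b.inner_eq_ite, Submodule.coe_inner]
    simp only [mul_apply, transpose_apply, of_apply, PiLp.inner_apply]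
    exact sum_congr rfl fun _ _ => mul_comm _ _
  · ext l i
    have hcol := (Submodule.mem_orthogonal' _ _).mp (b l).2 _
      (LinearMap.mem_range_self (toEuclideanLin Y) (EuclideanSpace.single i 1))
    simpa [mul_apply, PiLp.inner_apply, mul_comm] using hcol

theorem sum_filter_sq_le_frobSq_sub_diagonal {n : ℕ} (Y : Matrix (Fin n) (Fin n) ℝ)
    {s : Fin n → ℝ} (hs : Antitone s) (hs0 : 0 ≤ s) :
    ∑ i with Y.rank ≤ i.val, s i ^ 2 ≤ frobSq (Y - diagonal s) := by
  obtain ⟨k, hk, W, hW, hWY⟩ := exists_orthonormal_cols_transpose_mul_eq_zero Y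
  have hq1 (j : Fin n) : ∑ l, W j l ^ 2 ≤ 1 := by
    simpa [frobSq_transpose_mul_diagonal, frobSq_diagonal, Pi.single_apply] using
      frobSq_transpose_mul_le hW (diagonal (Pi.single j 1))
  have hqsum : ∑ j, ∑ l, W j l ^ 2 + Y.rank = n := by
    rw [show ∑ j, ∑ l, W j l ^ 2 = frobSq W from rfl, frobSq_eq_trace, hW, trace_one,
      Fintype.card_fin]
    exact_mod_cast hk
  calc ∑ i with Y.rank ≤ i.val, s i ^ 2 ≤ ∑ j, s j ^ 2 * ∑ l, W j l ^ 2 :=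
        sum_filter_le_sum_mul_of_antitone (fun i j h => pow_le_pow_left₀ (hs0 j) (hs h) 2)
          (fun j => sum_nonneg fun _ _ => sq_nonneg _) hq1 hqsum
    _ = frobSq (Wᵀ * (Y - diagonal s)) := by
        rw [Matrix.mul_sub, hWY, zero_sub, frobSq_neg, frobSq_transpose_mul_diagonal]
    _ ≤ frobSq (Y - diagonal s) := frobSq_transpose_mul_le hW _

theorem sum_filter_sq_le_frobSq_sub_svd {m n : ℕ} {U : Matrix (Fin m) (Fin n) ℝ}
    {V : Matrix (Fin n) (Fin n) ℝ} (hU : Uᵀ * U = 1) (hV : Vᵀ * V = 1) {s : Fin n → ℝ}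
    (hs : Antitone s) (hs0 : 0 ≤ s) (X : Matrix (Fin m) (Fin n) ℝ) :
    ∑ i with X.rank ≤ i.val, s i ^ 2 ≤ frobSq (X - U * diagonal s * Vᵀ) := by
  have hVVt : V * Vᵀ = 1 := mul_eq_one_comm.mp hV
  set Y := Uᵀ * X * V
  have hY : Y - diagonal s = Uᵀ * ((X - U * diagonal s * Vᵀ) * V) := by
    rw [Matrix.sub_mul, Matrix.mul_sub, Matrix.mul_assoc (U * diagonal s), hV, Matrix.mul_one,
      ← Matrix.mul_assoc, ← Matrix.mul_assoc, hU, Matrix.one_mul]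
  calc ∑ i with X.rank ≤ i.val, s i ^ 2 ≤ ∑ i with Y.rank ≤ i.val, s i ^ 2 := by
        refine sum_le_sum_of_subset_of_nonneg (fun i => ?_) fun i _ _ => sq_nonneg _
        simp only [mem_filter, mem_univ, true_and]
        exact ((rank_mul_le_left _ _).trans (rank_mul_le_right _ _)).trans
    _ ≤ frobSq (Y - diagonal s) := sum_filter_sq_le_frobSq_sub_diagonal Y hs hs0
    _ ≤ frobSq ((X - U * diagonal s * Vᵀ) * V) := hY ▸ frobSq_transpose_mul_le hU _
    _ = frobSq (X - U * diagonal s * Vᵀ) := frobSq_mul_of_mul_transpose_eq_one hVVt _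

noncomputable def hardThreshold (t x : ℝ) : ℝ := if t < x then x else 0

theorem hardThreshold_sub_sq_div_two_add {lam x : ℝ} (hlam : 0 ≤ lam) (hx : 0 ≤ x) :
    (hardThreshold √(2 * lam) x - x) ^ 2 / 2 +
      (if hardThreshold √(2 * lam) x ≠ 0 then lam else 0) = min (x ^ 2 / 2) lam := by
  have hsq : √(2 * lam) ^ 2 = 2 * lam := Real.sq_sqrt (by linarith)
  unfold hardThreshold
  split_ifs with hlt hne hne
  · have : lam ≤ x ^ 2 / 2 := by nlinarith [Real.sqrt_nonneg (2 * lam)]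
    rw [min_eq_right this]; ring
  · rw [not_not.mp hne] at hlt
    exact absurd hlt (not_lt.mpr (Real.sqrt_nonneg _))
  · exact absurd rfl hne
  · have : x ^ 2 / 2 ≤ lam := by nlinarith [Real.sqrt_nonneg (2 * lam)]
    rw [min_eq_left this]; ring

theorem half_frobSq_svd_sub_add_rank {m n : ℕ} {U : Matrix (Fin m) (Fin n) ℝ}
    {V : Matrix (Fin n) (Fin n) ℝ} (hU : Uᵀ * U = 1) (hV : Vᵀ * V = 1) (lam : ℝ)
    (d σ : Fin n → ℝ) :
    (1 / 2) * frobSq (U * diagonal d * Vᵀ - U * diagonal σ * Vᵀ) +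
        lam * ((U * diagonal d * Vᵀ).rank : ℝ) =
      ∑ i, ((d i - σ i) ^ 2 / 2 + if d i ≠ 0 then lam else 0) := by
  have hVt : Vᵀ * Vᵀᵀ = 1 := by rwa [transpose_transpose]
  rw [← Matrix.sub_mul, ← Matrix.mul_sub, frobSq_mul_of_mul_transpose_eq_one hVt,
    frobSq_mul_of_transpose_mul_eq_one hU, rank_mul_mul_of_orthonormal hU hVt, diagonal_sub,
    frobSq_diagonal, rank_diagonal, Fintype.card_subtype, sum_add_distrib, ← sum_div,
    ← sum_filter, sum_const, nsmul_eq_mul]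
  ring

/-- Let `Z = U diag(σ) Vᵀ` be an SVD of the m×n matrix `Z`. For `λ ≥ 0`,
the hard-thresholded matrix `S_{λ,ℓ₀}(Z) = U diag(σᵢ·1(σᵢ > √(2λ))) Vᵀ` minimizes
`½‖X − Z‖_F² + λ·rank(X)` over all m×n matrices `X`. -/
theorem hard_thresholding_minimizes_rank_objective
    {m n : ℕ} (lam : ℝ) (hlam : 0 ≤ lam)
    (Z : Matrix (Fin m) (Fin n) ℝ)
    (U : Matrix (Fin m) (Fin n) ℝ) (V : Matrix (Fin n) (Fin n) ℝ) (σ : Fin n → ℝ)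
    (hU : Uᵀ * U = 1) (hV : Vᵀ * V = 1)
    (hσ : ∀ i, 0 ≤ σ i) (hσord : ∀ i j : Fin n, i ≤ j → σ j ≤ σ i)
    (hZ : Z = U * Matrix.diagonal σ * Vᵀ) :
    ∀ X : Matrix (Fin m) (Fin n) ℝ,
      (1 / 2) * frobSq
          (U * Matrix.diagonal (fun i => if Real.sqrt (2 * lam) < σ i then σ i else 0) * Vᵀ - Z) +
        lam * ((U * Matrix.diagonal (fun i => if Real.sqrt (2 * lam) < σ i then σ i else 0)
            * Vᵀ).rank : ℝ) ≤
      (1 / 2) * frobSq (X - Z) + lam * (X.rank : ℝ) := by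
  intro X
  subst hZ
  calc _ = ∑ i, min (σ i ^ 2 / 2) lam := by
        rw [half_frobSq_svd_sub_add_rank hU hV]
        exact sum_congr rfl fun i _ => hardThreshold_sub_sq_div_two_add hlam (hσ i)
    _ ≤ ∑ i with X.rank ≤ i.val, σ i ^ 2 / 2 + lam * X.rank :=
        sum_min_le_sum_filter_le_add _ hlam _
    _ ≤ _ := by
        have := sum_filter_sq_le_frobSq_sub_svd hU hV hσord hσ X
        rw [← sum_div]
        linarith
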